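/- For any grid function v ∈ V_h^0, the discrete inner product satisfies (δ_x² δ_y² v, H_h v) ≥ 0. -/

import Mathlib

open Finset

noncomputable section

/-- A grid function on the `(M_x+1) × (M_y+1)` grid, represented as a total function
(only the values at indices `0 ≤ i ≤ M_x`, `0 ≤ j ≤ M_y` are relevant). -/
abbrev GridFn : Type := ℕ → ℕ → ℝ

/-- Spatial stepsize `h_x = 1/M_x`. -/
def hx (Mx : ℕ) : ℝ := ((Mx : ℝ))⁻¹

/-- Spatial stepsize `h_y = 1/M_y`. -/
def hy (My : ℕ) : ℝ := ((My : ℝ))⁻¹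

/-- Second-order difference in the x-direction:
`δ_x² v_{i,j} = (v_{i+1,j} − 2v_{i,j} + v_{i−1,j})/h_x²` (used for `1 ≤ i ≤ M_x−1`). -/
def dxx (Mx : ℕ) (v : GridFn) : GridFn := fun i j =>
  (v (i + 1) j - 2 * v i j + v (i - 1) j) / (hx Mx) ^ 2

/-- Second-order difference in the y-direction. -/
def dyy (My : ℕ) (v : GridFn) : GridFn := fun i j =>
  (v i (j + 1) - 2 * v i j + v i (j - 1)) / (hy My) ^ 2

/-- Compact operator `H_x`: `H_x v_{i,j} = v_{i,j} + (h_x²/12) δ_x² v_{i,j}` for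
`1 ≤ i ≤ M_x−1`, and `H_x v_{i,j} = v_{i,j}` for `i ∈ {0, M_x}`. -/
def Hcx (Mx : ℕ) (v : GridFn) : GridFn := fun i j =>
  if 1 ≤ i ∧ i ≤ Mx - 1 then v i j + (hx Mx) ^ 2 / 12 * dxx Mx v i j else v i j

/-- Compact operator `H_y`. -/
def Hcy (My : ℕ) (v : GridFn) : GridFn := fun i j =>
  if 1 ≤ j ∧ j ≤ My - 1 then v i j + (hy My) ^ 2 / 12 * dyy My v i j else v i j

/-- Compact operator `H_h = H_x H_y`. -/
def Hch (Mx My : ℕ) (v : GridFn) : GridFn := Hcx Mx (Hcy My v)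

/-- `Λ_h v = H_y(δ_x² v) + H_x(δ_y² v)` (at interior indices). -/
def Lamh (Mx My : ℕ) (v : GridFn) : GridFn := fun i j =>
  Hcy My (dxx Mx v) i j + Hcx Mx (dyy My v) i j

/-- Discrete L² inner product
`(v,w) = h_x h_y Σ_{i=1}^{M_x−1} Σ_{j=1}^{M_y−1} v_{i,j} w_{i,j}`. -/
def innp (Mx My : ℕ) (v w : GridFn) : ℝ :=
  hx Mx * hy My * ∑ i ∈ Icc 1 (Mx - 1), ∑ j ∈ Icc 1 (My - 1), v i j * w i j

/-- Discrete L² norm `‖v‖ = (v,v)^{1/2}`. -/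
def nrm (Mx My : ℕ) (v : GridFn) : ℝ := Real.sqrt (innp Mx My v v)

/-- Discrete maximum norm `‖v‖_∞ = max_{1≤i≤M_x−1, 1≤j≤M_y−1} |v_{i,j}|`. -/
def nrmInf (Mx My : ℕ) (v : GridFn) : ℝ :=
  ((Icc 1 (Mx - 1)) ×ˢ (Icc 1 (My - 1))).fold max 0 fun p => |v p.1 p.2|

/-- `‖δ_x v‖_x² = h_x h_y Σ_{i=1}^{M_x} Σ_{j=1}^{M_y−1} (δ_x v_{i−1/2,j})²`. -/
def nrmX2 (Mx My : ℕ) (v : GridFn) : ℝ :=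
  hx Mx * hy My * ∑ i ∈ Icc 1 Mx, ∑ j ∈ Icc 1 (My - 1),
    ((v i j - v (i - 1) j) / hx Mx) ^ 2

/-- `‖δ_y v‖_y² = h_x h_y Σ_{i=1}^{M_x−1} Σ_{j=1}^{M_y} (δ_y v_{i,j−1/2})²`. -/
def nrmY2 (Mx My : ℕ) (v : GridFn) : ℝ :=
  hx Mx * hy My * ∑ i ∈ Icc 1 (Mx - 1), ∑ j ∈ Icc 1 My,
    ((v i j - v i (j - 1)) / hy My) ^ 2

/-- Membership in `V_h^0`: a grid function vanishing on the boundary of the grid. -/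
def BZero (Mx My : ℕ) (v : GridFn) : Prop :=
  ∀ i ≤ Mx, ∀ j ≤ My, (i = 0 ∨ i = Mx ∨ j = 0 ∨ j = My) → v i j = 0

/-- Interior grid indices: `1 ≤ i ≤ M_x−1`, `1 ≤ j ≤ M_y−1`. -/
def interiorIdx (Mx My i j : ℕ) : Prop :=
  1 ≤ i ∧ i ≤ Mx - 1 ∧ 1 ≤ j ∧ j ≤ My - 1

/-- Time average `w̄^{n−1/2} = (w^n + w^{n−1})/2` of a sequence of grid functions. -/
def tbar (u : ℕ → GridFn) (n : ℕ) : GridFn := fun i j => (u n i j + u (n - 1) i j) / 2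

/-- Time difference `δ_t w^{n−1/2} = (w^n − w^{n−1})/τ` of a sequence of grid functions. -/
def tdiff (τ : ℝ) (u : ℕ → GridFn) (n : ℕ) : GridFn := fun i j =>
  (u n i j - u (n - 1) i j) / τ

/-- Extrapolation `l^{*,1} = l⁰`, `l^{*,n} = (3 l^{n−1} − l^{n−2})/2` for `n ≥ 2`. -/
def extrap (u : ℕ → GridFn) (n : ℕ) : GridFn :=
  if n = 1 then u 0 else fun i j => (3 * u (n - 1) i j - u (n - 2) i j) / 2

/-! With `L` and `D` the unscaled second and backward differences and `P = L_x L_y v`, at interior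
points `H_h v = v + L_x v / 12 + L_y v / 12 + P / 144` and `δ_x² δ_y² v = M_x² M_y² P`.
Summation by parts (the boundary terms vanish because `v ∈ V_h^0`) turns `Σ P v` into the mixed
energy `G = Σ (D_x D_y v)²`, and `Σ P · L_x v`, `Σ P · L_y v` into `-Σ (L_x D_y v)²`,
`-Σ (L_y D_x v)²`; the one-dimensional inverse inequality `Σ (L u)² ≤ 4 Σ (D u)²` bounds both
by `4 G`. Hence the inner product is at least `M_x M_y (G - 8 G / 12 + Σ P² / 144) ≥ 0`. -/

def secondDiff (u : ℕ → ℝ) (i : ℕ) : ℝ := u (i + 1) - 2 * u i + u (i - 1)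

def backDiff (u : ℕ → ℝ) (i : ℕ) : ℝ := u i - u (i - 1)

theorem secondDiff_eq_backDiff_sub (u : ℕ → ℝ) (i : ℕ) :
    secondDiff u i = backDiff u (i + 1) - backDiff u i := by
  simp only [secondDiff, backDiff, Nat.add_sub_cancel]
  ring

theorem sum_secondDiff_mul (u z : ℕ → ℝ) (N : ℕ) :
    ∑ i ∈ Icc 1 N, secondDiff u i * z i =
      -∑ i ∈ Icc 1 (N + 1), backDiff u i * backDiff z i
        + backDiff u (N + 1) * z (N + 1) - backDiff u 1 * z 0 := by
  induction N with
  | zero =>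
    simp only [zero_add, Icc_self, sum_singleton, Icc_eq_empty_of_lt zero_lt_one, sum_empty,
      backDiff]
    ring
  | succ N ih =>
    rw [sum_Icc_succ_top (by omega), ih, sum_Icc_succ_top (by omega : 1 ≤ N + 1 + 1),
      secondDiff_eq_backDiff_sub]
    simp only [backDiff, Nat.add_sub_cancel]
    ring

theorem sum_secondDiff_mul_of_zero_boundary {M : ℕ} (u z : ℕ → ℝ) (h0 : z 0 = 0)
    (hM : z M = 0) :
    ∑ i ∈ Icc 1 (M - 1), secondDiff u i * z i = -∑ i ∈ Icc 1 M, backDiff u i * backDiff z i := by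
  cases M with
  | zero => simp
  | succ N => simpa [h0, hM] using sum_secondDiff_mul u z N

/-- The extra term `2 (D u_{N+1})²` is what makes the induction go through, via
`(a - b)² ≤ 2 a² + 2 b²`. -/
theorem sum_secondDiff_sq_add_le (u : ℕ → ℝ) (N : ℕ) :
    ∑ i ∈ Icc 1 N, secondDiff u i ^ 2 + 2 * backDiff u (N + 1) ^ 2
      ≤ 4 * ∑ i ∈ Icc 1 (N + 1), backDiff u i ^ 2 := by
  induction N with
  | zero =>
    simp only [zero_add, Icc_self, sum_singleton, Icc_eq_empty_of_lt zero_lt_one, sum_empty]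
    linarith [sq_nonneg (backDiff u 1)]
  | succ N ih =>
    rw [sum_Icc_succ_top (by omega), sum_Icc_succ_top (by omega : 1 ≤ N + 1 + 1),
      secondDiff_eq_backDiff_sub]
    nlinarith [sq_nonneg (backDiff u (N + 1 + 1) + backDiff u (N + 1))]

theorem sum_secondDiff_sq_le (M : ℕ) (u : ℕ → ℝ) :
    ∑ i ∈ Icc 1 (M - 1), secondDiff u i ^ 2 ≤ 4 * ∑ i ∈ Icc 1 M, backDiff u i ^ 2 := by
  cases M with
  | zero => simp
  | succ N =>
    have h := sum_secondDiff_sq_add_le u N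
    have hlast := sq_nonneg (backDiff u (N + 1))
    simp only [Nat.add_sub_cancel]
    linarith

def secondDiffX (v : GridFn) : GridFn := fun i j => secondDiff (v · j) i

def secondDiffY (v : GridFn) : GridFn := fun i j => secondDiff (v i) j

def backDiffX (v : GridFn) : GridFn := fun i j => backDiff (v · j) i

def backDiffY (v : GridFn) : GridFn := fun i j => backDiff (v i) j

theorem secondDiffX_secondDiffY (v : GridFn) :
    secondDiffX (secondDiffY v) = secondDiffY (secondDiffX v) := by
  funext i j
  simp only [secondDiffX, secondDiffY, secondDiff]
  ring

theorem backDiffY_secondDiffX (v : GridFn) :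
    backDiffY (secondDiffX v) = secondDiffX (backDiffY v) := by
  funext i j
  simp only [backDiffY, secondDiffX, backDiff, secondDiff]
  ring

theorem backDiffX_secondDiffY (v : GridFn) :
    backDiffX (secondDiffY v) = secondDiffY (backDiffX v) := by
  funext i j
  simp only [backDiffX, secondDiffY, backDiff, secondDiff]
  ring

theorem backDiffY_backDiffX (v : GridFn) : backDiffY (backDiffX v) = backDiffX (backDiffY v) := by
  funext i j
  simp only [backDiffX, backDiffY, backDiff]
  ring

theorem sum_sum_secondDiffX_mul {M : ℕ} (J : Finset ℕ) (w z : GridFn)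
    (hz : ∀ j ∈ J, z 0 j = 0 ∧ z M j = 0) :
    ∑ i ∈ Icc 1 (M - 1), ∑ j ∈ J, secondDiffX w i j * z i j
      = -∑ i ∈ Icc 1 M, ∑ j ∈ J, backDiffX w i j * backDiffX z i j := by
  rw [sum_comm, sum_comm (s := Icc 1 M), ← sum_neg_distrib]
  exact sum_congr rfl fun j hj =>
    sum_secondDiff_mul_of_zero_boundary (w · j) (z · j) (hz j hj).1 (hz j hj).2

theorem sum_sum_secondDiffY_mul {M : ℕ} (I : Finset ℕ) (w z : GridFn)
    (hz : ∀ i ∈ I, z i 0 = 0 ∧ z i M = 0) :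
    ∑ i ∈ I, ∑ j ∈ Icc 1 (M - 1), secondDiffY w i j * z i j
      = -∑ i ∈ I, ∑ j ∈ Icc 1 M, backDiffY w i j * backDiffY z i j := by
  rw [← sum_neg_distrib]
  exact sum_congr rfl fun i hi =>
    sum_secondDiff_mul_of_zero_boundary (w i) (z i) (hz i hi).1 (hz i hi).2

theorem sum_sum_secondDiffX_sq_le (M : ℕ) (J : Finset ℕ) (w : GridFn) :
    ∑ i ∈ Icc 1 (M - 1), ∑ j ∈ J, secondDiffX w i j ^ 2
      ≤ 4 * ∑ i ∈ Icc 1 M, ∑ j ∈ J, backDiffX w i j ^ 2 := by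
  rw [sum_comm, sum_comm (s := Icc 1 M), mul_sum]
  exact sum_le_sum fun j _ => sum_secondDiff_sq_le M (w · j)

theorem sum_sum_secondDiffY_sq_le (M : ℕ) (I : Finset ℕ) (w : GridFn) :
    ∑ i ∈ I, ∑ j ∈ Icc 1 (M - 1), secondDiffY w i j ^ 2
      ≤ 4 * ∑ i ∈ I, ∑ j ∈ Icc 1 M, backDiffY w i j ^ 2 := by
  rw [mul_sum]
  exact sum_le_sum fun i _ => sum_secondDiff_sq_le M (w i)

theorem dxx_apply (Mx : ℕ) (v : GridFn) (i j : ℕ) :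
    dxx Mx v i j = (Mx : ℝ) ^ 2 * secondDiffX v i j := by
  simp only [dxx, hx, secondDiffX, secondDiff, inv_pow, div_inv_eq_mul]
  ring

theorem dyy_apply (My : ℕ) (v : GridFn) (i j : ℕ) :
    dyy My v i j = (My : ℝ) ^ 2 * secondDiffY v i j := by
  simp only [dyy, hy, secondDiffY, secondDiff, inv_pow, div_inv_eq_mul]
  ring

theorem dxx_dyy_apply (Mx My : ℕ) (v : GridFn) (i j : ℕ) :
    dxx Mx (dyy My v) i j = (Mx : ℝ) ^ 2 * (My : ℝ) ^ 2 * secondDiffX (secondDiffY v) i j := by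
  simp only [dxx_apply, secondDiffX, secondDiff, dyy_apply]
  ring

theorem Hcx_of_mem {Mx i : ℕ} (hi : 1 ≤ i ∧ i ≤ Mx - 1) (v : GridFn) (j : ℕ) :
    Hcx Mx v i j = v i j + secondDiffX v i j / 12 := by
  have hMx : (Mx : ℝ) ≠ 0 := by norm_cast; omega
  simp only [Hcx, if_pos hi, dxx_apply, hx]
  field_simp

theorem Hcy_of_mem {My j : ℕ} (hj : 1 ≤ j ∧ j ≤ My - 1) (v : GridFn) (i : ℕ) :
    Hcy My v i j = v i j + secondDiffY v i j / 12 := by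
  have hMy : (My : ℝ) ≠ 0 := by norm_cast; omega
  simp only [Hcy, if_pos hj, dyy_apply, hy]
  field_simp

theorem Hch_of_mem {Mx My i j : ℕ} (hi : 1 ≤ i ∧ i ≤ Mx - 1) (hj : 1 ≤ j ∧ j ≤ My - 1)
    (v : GridFn) :
    Hch Mx My v i j = v i j + secondDiffX v i j / 12 + secondDiffY v i j / 12
      + secondDiffX (secondDiffY v) i j / 144 := by
  simp only [Hch, Hcx_of_mem hi, secondDiffX, secondDiff, Hcy_of_mem hj, secondDiffY]
  ring

theorem innp_dxx_dyy_Hch (Mx My : ℕ) (v : GridFn) :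
    innp Mx My (dxx Mx (dyy My v)) (Hch Mx My v) =
      Mx * My * (∑ i ∈ Icc 1 (Mx - 1), ∑ j ∈ Icc 1 (My - 1),
          secondDiffX (secondDiffY v) i j * v i j
        + (∑ i ∈ Icc 1 (Mx - 1), ∑ j ∈ Icc 1 (My - 1),
            secondDiffX (secondDiffY v) i j * secondDiffX v i j) / 12
        + (∑ i ∈ Icc 1 (Mx - 1), ∑ j ∈ Icc 1 (My - 1),
            secondDiffX (secondDiffY v) i j * secondDiffY v i j) / 12
        + (∑ i ∈ Icc 1 (Mx - 1), ∑ j ∈ Icc 1 (My - 1),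
            secondDiffX (secondDiffY v) i j ^ 2) / 144) := by
  have pointwise : ∀ i ∈ Icc 1 (Mx - 1), ∀ j ∈ Icc 1 (My - 1),
      dxx Mx (dyy My v) i j * Hch Mx My v i j = (Mx : ℝ) ^ 2 * (My : ℝ) ^ 2 *
        (secondDiffX (secondDiffY v) i j * v i j
          + secondDiffX (secondDiffY v) i j * secondDiffX v i j / 12
          + secondDiffX (secondDiffY v) i j * secondDiffY v i j / 12
          + secondDiffX (secondDiffY v) i j ^ 2 / 144) := by
    intro i hi j hj
    rw [dxx_dyy_apply, Hch_of_mem (mem_Icc.1 hi) (mem_Icc.1 hj)]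
    ring
  have scale : ((Mx : ℝ))⁻¹ * ((My : ℝ))⁻¹ * ((Mx : ℝ) ^ 2 * (My : ℝ) ^ 2) = Mx * My := by
    rcases eq_or_ne (Mx : ℝ) 0 with hMx | hMx
    · simp [hMx]
    rcases eq_or_ne (My : ℝ) 0 with hMy | hMy
    · simp [hMy]
    field_simp
  rw [innp, sum_congr rfl fun i hi => sum_congr rfl fun j hj => pointwise i hi j hj]
  simp only [← mul_sum, hx, hy, ← mul_assoc, scale, sum_add_distrib, ← sum_div]

def mixedEnergy (Mx My : ℕ) (v : GridFn) : ℝ :=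
  ∑ i ∈ Icc 1 Mx, ∑ j ∈ Icc 1 My, backDiffX (backDiffY v) i j ^ 2

theorem mixedEnergy_nonneg (Mx My : ℕ) (v : GridFn) : 0 ≤ mixedEnergy Mx My v :=
  sum_nonneg fun _ _ => sum_nonneg fun _ _ => sq_nonneg _

namespace BZero

variable {Mx My : ℕ} {v : GridFn}

theorem left (hv : BZero Mx My v) {j : ℕ} (hj : j ≤ My) : v 0 j = 0 :=
  hv 0 (Nat.zero_le _) j hj (Or.inl rfl)

theorem right (hv : BZero Mx My v) {j : ℕ} (hj : j ≤ My) : v Mx j = 0 :=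
  hv Mx le_rfl j hj (Or.inr (Or.inl rfl))

theorem bottom (hv : BZero Mx My v) {i : ℕ} (hi : i ≤ Mx) : v i 0 = 0 :=
  hv i hi 0 (Nat.zero_le _) (Or.inr (Or.inr (Or.inl rfl)))

theorem top (hv : BZero Mx My v) {i : ℕ} (hi : i ≤ Mx) : v i My = 0 :=
  hv i hi My le_rfl (Or.inr (Or.inr (Or.inr rfl)))

theorem sum_secondDiffXY_mul_eq_mixedEnergy (hv : BZero Mx My v) :
    ∑ i ∈ Icc 1 (Mx - 1), ∑ j ∈ Icc 1 (My - 1), secondDiffX (secondDiffY v) i j * v i j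
      = mixedEnergy Mx My v := by
  have hv_y : ∀ i ∈ Icc 1 (Mx - 1), v i 0 = 0 ∧ v i My = 0 := fun i hi => by
    have hi : i ≤ Mx := by grind
    exact ⟨hv.bottom hi, hv.top hi⟩
  have hDv_x : ∀ j ∈ Icc 1 My, backDiffY v 0 j = 0 ∧ backDiffY v Mx j = 0 := fun j hj => by
    have hj : j ≤ My := by grind
    have hj' : j - 1 ≤ My := by omega
    simp [backDiffY, backDiff, hv.left hj, hv.right hj, hv.left hj', hv.right hj']
  rw [secondDiffX_secondDiffY, sum_sum_secondDiffY_mul _ _ _ hv_y, backDiffY_secondDiffX,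
    sum_sum_secondDiffX_mul _ _ _ hDv_x, neg_neg, mixedEnergy]
  simp only [sq]

theorem neg_four_mul_mixedEnergy_le_sum_secondDiffXY_mul_secondDiffX (hv : BZero Mx My v) :
    -(4 * mixedEnergy Mx My v) ≤
      ∑ i ∈ Icc 1 (Mx - 1), ∑ j ∈ Icc 1 (My - 1),
        secondDiffX (secondDiffY v) i j * secondDiffX v i j := by
  have hXv_y : ∀ i ∈ Icc 1 (Mx - 1), secondDiffX v i 0 = 0 ∧ secondDiffX v i My = 0 :=
    fun i hi => by
      have hi : i + 1 ≤ Mx := by grind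
      have hi' : i ≤ Mx := by omega
      have hi'' : i - 1 ≤ Mx := by omega
      simp [secondDiffX, secondDiff, hv.bottom hi, hv.top hi, hv.bottom hi', hv.top hi',
        hv.bottom hi'', hv.top hi'']
  rw [secondDiffX_secondDiffY, sum_sum_secondDiffY_mul _ _ _ hXv_y, backDiffY_secondDiffX,
    neg_le_neg_iff, mixedEnergy]
  simp only [← sq]
  exact sum_sum_secondDiffX_sq_le Mx (Icc 1 My) (backDiffY v)

theorem neg_four_mul_mixedEnergy_le_sum_secondDiffXY_mul_secondDiffY (hv : BZero Mx My v) :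
    -(4 * mixedEnergy Mx My v) ≤
      ∑ i ∈ Icc 1 (Mx - 1), ∑ j ∈ Icc 1 (My - 1),
        secondDiffX (secondDiffY v) i j * secondDiffY v i j := by
  have hYv_x : ∀ j ∈ Icc 1 (My - 1), secondDiffY v 0 j = 0 ∧ secondDiffY v Mx j = 0 :=
    fun j hj => by
      have hj : j + 1 ≤ My := by grind
      have hj' : j ≤ My := by omega
      have hj'' : j - 1 ≤ My := by omega
      simp [secondDiffY, secondDiff, hv.left hj, hv.right hj, hv.left hj', hv.right hj',
        hv.left hj'', hv.right hj'']
  rw [sum_sum_secondDiffX_mul _ _ _ hYv_x, backDiffX_secondDiffY, neg_le_neg_iff, mixedEnergy,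
    ← backDiffY_backDiffX]
  simp only [← sq]
  exact sum_sum_secondDiffY_sq_le My (Icc 1 Mx) (backDiffX v)

end BZero

theorem stmt9_general (Mx My : ℕ) (v : GridFn)
    (hv : BZero Mx My v) :
    0 ≤ innp Mx My (dxx Mx (dyy My v)) (Hch Mx My v) := by
  rw [innp_dxx_dyy_Hch]
  refine mul_nonneg (by positivity) ?_
  have hP_sq : 0 ≤ ∑ i ∈ Icc 1 (Mx - 1), ∑ j ∈ Icc 1 (My - 1),
      secondDiffX (secondDiffY v) i j ^ 2 :=
    sum_nonneg fun _ _ => sum_nonneg fun _ _ => sq_nonneg _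
  linarith [hv.sum_secondDiffXY_mul_eq_mixedEnergy,
    hv.neg_four_mul_mixedEnergy_le_sum_secondDiffXY_mul_secondDiffX,
    hv.neg_four_mul_mixedEnergy_le_sum_secondDiffXY_mul_secondDiffY,
    mixedEnergy_nonneg Mx My v]

/-- For any `v ∈ V_h^0`, `(δ_x² δ_y² v, H_h v) ≥ 0`. -/
theorem stmt9 (Mx My : ℕ) (hMx : 2 ≤ Mx) (hMy : 2 ≤ My) (v : GridFn)
    (hv : BZero Mx My v) :
    0 ≤ innp Mx My (dxx Mx (dyy My v)) (Hch Mx My v) :=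
  stmt9_general Mx My v hv
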